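/- For the covariance-matrix formulation of power iteration, centralized and federated subspace iteration with orthonormalization are equivalent: let A be an m×N real matrix with columns indexed by the sigma type N = (s : Fin S) × Fin (n s), and define two sequences of m×k matrices by H_i := the matrix whose columns are gramSchmidtNormed applied to the columns of (A * Aᵀ) * H_{i−1}, and H̃_i := the matrix whose columns are gramSchmidtNormed applied to the columns of Σ_s A^s * ((A^s)ᵀ * H̃_{i−1}). If H̃_0 = H_0, then H̃_i = H_i for all i. -/

import Mathlib

open Matrix

instance finChainWellFoundedLT (k : ℕ) :
    @IsWellFounded (Fin k) (fun a b => @LT.lt _ (@Preorder.toLT _ (@PartialOrder.toPreorder _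
      (@SemilatticeInf.toPartialOrder _ (@Lattice.toSemilatticeInf _
        (@DistribLattice.toLattice _ (@instDistribLatticeOfLinearOrder _
          Fin.instLinearOrder)))))) a b) :=
  inferInstanceAs (WellFoundedLT (Fin k))

def col {a b : Type*} (M : Matrix a b ℝ) (j : b) : EuclideanSpace ℝ a :=
  WithLp.toLp 2 (fun r => M r j)

namespace Matrix

variable {ι γ α R : Type*} {β : α → Type*} [Fintype α] [∀ a, Fintype (β a)]

theorem sum_submatrix_sigma_mul_submatrix_sigma [NonUnitalNonAssocSemiring R]
    (A : Matrix ι (Σ a, β a) R) (B : Matrix (Σ a, β a) γ R) :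
    ∑ a, A.submatrix id (Sigma.mk a) * B.submatrix (Sigma.mk a) id = A * B := by
  ext i j
  simp only [sum_apply, mul_apply, submatrix_apply, id_eq, Fintype.sum_sigma]

theorem sum_submatrix_sigma_mul_transpose_mul [Fintype ι] [NonUnitalSemiring R]
    (A : Matrix ι (Σ a, β a) R) (X : Matrix ι γ R) :
    ∑ a, A.submatrix id (Sigma.mk a) * ((A.submatrix id (Sigma.mk a))ᵀ * X) = A * Aᵀ * X := by
  simp only [← Matrix.mul_assoc, ← Matrix.sum_mul, transpose_submatrix,
    sum_submatrix_sigma_mul_submatrix_sigma]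

end Matrix

/-- Covariance-matrix formulation of power iteration: centralized and federated subspace
iteration with orthonormalization are equivalent.  The centralized iterates satisfy
`H_{i+1} = gramSchmidtNormed` applied to the columns of `(A * Aᵀ) * H_i`, the federated
iterates satisfy `H̃_{i+1} = gramSchmidtNormed` applied to the columns of
`Σ_s A^s * ((A^s)ᵀ * H̃_i)`.  If `H̃_0 = H_0`, then `H̃_i = H_i` for all `i`. -/
theorem federated_covariance_subspace_iteration_eq_centralized (S m k : ℕ) (n : Fin S → ℕ)
    (A : Matrix (Fin m) ((s : Fin S) × Fin (n s)) ℝ)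
    (H Ht : ℕ → Matrix (Fin m) (Fin k) ℝ)
    (hH : ∀ (i : ℕ) (r : Fin m) (c : Fin k), H (i + 1) r c =
      InnerProductSpace.gramSchmidtNormed ℝ (_root_.col ((A * Aᵀ) * H i)) c r)
    (hHt : ∀ (i : ℕ) (r : Fin m) (c : Fin k), Ht (i + 1) r c =
      InnerProductSpace.gramSchmidtNormed ℝ
        (_root_.col (∑ s : Fin S,
          (A.submatrix id (Sigma.mk s)) * ((A.submatrix id (Sigma.mk s))ᵀ * Ht i))) c r)
    (h0 : Ht 0 = H 0) :
    ∀ i : ℕ, Ht i = H i := by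
  intro i
  induction i with
  | zero => exact h0
  | succ i ih =>
    ext r c
    rw [hHt, hH, ih, sum_submatrix_sigma_mul_transpose_mul]
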